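/- Let W be a multigraphon with ρ(W) ∈ (0,∞), let κ ∈ (0,∞), and for t ∈ [0,∞) let W_t be the multigraphon defined by W_t(x,y,k) = Σ_{h=0}^∞ W(x,y,h)·q(t,h,k, D(W,x)D(W,y)/ρ(W)) for x≠y and W_t(x,x,k) = 1[2|k]·Σ_{h=0}^∞ W(x,x,2h)·q(t,h,k/2, D(W,x)²/(2ρ(W))). Then for every k ∈ ℕ and every A ∈ A_k, the map t ↦ t_=(A, W_t) is continuous on [0,∞) and lim_{t→0+} t_=(A, W_t) = t_=(A, W). -/

import Mathlib

open MeasureTheory Filter Set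
open scoped Classical ENNReal Topology BigOperators

noncomputable section

/-- `B : ℕ → ℕ → ℕ` is the adjacency matrix of a multigraph on vertex set `{0,…,n-1}`:
symmetric, even diagonal entries (loops counted twice), vanishing outside `[0,n)²`. -/
def IsAdjOn (n : ℕ) (B : ℕ → ℕ → ℕ) : Prop :=
  (∀ i j, B i j = B j i) ∧ (∀ i, 2 ∣ B i i) ∧ ∀ i j, n ≤ i ∨ n ≤ j → B i j = 0

/-- Degree `d(B,i)` of vertex `i` in a multigraph on `n` vertices. -/
def degB (n : ℕ) (B : ℕ → ℕ → ℕ) (i : ℕ) : ℕ := ∑ j ∈ Finset.range n, B i j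

/-- Adjacency matrix of a multigraph on `n` vertices with `m` edges. -/
def IsAdjOnM (n m : ℕ) (B : ℕ → ℕ → ℕ) : Prop :=
  IsAdjOn n B ∧ ∑ i ∈ Finset.range n, ∑ j ∈ Finset.range n, B i j = 2 * m

/-- Top-left `k × k` submatrix (set to zero outside). -/
def subMat (k : ℕ) (B : ℕ → ℕ → ℕ) : ℕ → ℕ → ℕ :=
  fun i j => if i < k ∧ j < k then B i j else 0

/-- Induced homomorphism density `t_=(A,B)` of a `k`-vertex multigraph in an `n`-vertex one. -/
def tEqB (k n : ℕ) (A B : ℕ → ℕ → ℕ) : ℝ :=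
  ((Finset.univ.filter fun φ : Fin k → Fin n =>
      ∀ i j : Fin k, A i j = B (φ i) (φ j)).card : ℝ) / (n : ℝ) ^ k

/-- A multigraphon: symmetric, probability distribution on ℕ in each fibre over `[0,1]²`,
no odd diagonal values. -/
def IsMultigraphon (W : ℝ → ℝ → ℕ → ℝ) : Prop :=
  Measurable (fun p : ℝ × ℝ × ℕ => W p.1 p.2.1 p.2.2) ∧
  (∀ x y k, 0 ≤ W x y k ∧ W x y k ≤ 1) ∧
  (∀ x y k, W x y k = W y x k) ∧
  (∀ x ∈ Icc (0:ℝ) 1, ∀ y ∈ Icc (0:ℝ) 1, (∑' k : ℕ, W x y k) = 1) ∧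
  (∀ x k, W x x (2 * k + 1) = 0)

/-- Induced homomorphism density `t_=(A,W)` of a multigraph in a multigraphon. -/
def tEqW (k : ℕ) (A : ℕ → ℕ → ℕ) (W : ℝ → ℝ → ℕ → ℝ) : ℝ :=
  ∫ x : Fin k → ℝ in Set.univ.pi (fun _ : Fin k => Icc (0:ℝ) 1),
    ∏ i : Fin k, ∏ j ∈ Finset.univ.filter (fun j : Fin k => i ≤ j),
      W (x i) (x j) (A i j)

/-- The average degree `D(W,x)` of a multigraphon at `x`. -/
def degW (W : ℝ → ℝ → ℕ → ℝ) (x : ℝ) : ℝ :=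
  ∫ y in Icc (0:ℝ) 1, ∑' k : ℕ, (k : ℝ) * W x y k

/-- The edge density `ρ(W)` of a multigraphon. -/
def rhoW (W : ℝ → ℝ → ℕ → ℝ) : ℝ := ∫ x in Icc (0:ℝ) 1, degW W x

/-- One step of the edge reconnecting dynamics: the edge `{vold, w}` is replaced by `{vnew, w}`. -/
def stepER (B : ℕ → ℕ → ℕ) (vold w vnew : ℕ) : ℕ → ℕ → ℕ := fun a b =>
  B a b - (if a = vold ∧ b = w then 1 else 0) - (if a = w ∧ b = vold then 1 else 0)
    + (if a = vnew ∧ b = w then 1 else 0) + (if a = w ∧ b = vnew then 1 else 0)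

/-- Transition probability of the edge reconnecting model with parameter `κ`
on multigraphs with `n` vertices and `m` edges. -/
def transER (κ : ℝ) (n m : ℕ) (B B' : ℕ → ℕ → ℕ) : ℝ :=
  ∑ v ∈ Finset.range n, ∑ w ∈ Finset.range n, ∑ u ∈ Finset.range n,
    ((B v w : ℝ) / (2 * m)) * (((degB n B u : ℝ) + κ) / (2 * m + n * κ)) *
      (if B' = stepER B v w u then 1 else 0)

/-- `(X T)_{T≥0}` is an edge reconnecting model with parameter `κ` on `A_n^m`:
a Markov chain with the edge reconnecting transition probabilities. -/
def IsEdgeReconnecting (κ : ℝ) {Ω : Type*} [MeasurableSpace Ω] (μ : Measure Ω)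
    (n m : ℕ) (X : ℕ → Ω → ℕ → ℕ → ℕ) : Prop :=
  (∀ T i j, Measurable fun ω => X T ω i j) ∧
  (∀ T ω, IsAdjOnM n m (X T ω)) ∧
  ∀ (T : ℕ) (past : ℕ → ℕ → ℕ → ℕ) (B' : ℕ → ℕ → ℕ),
    μ {ω | (∀ S ≤ T, X S ω = past S) ∧ X (T + 1) ω = B'} =
      μ {ω | ∀ S ≤ T, X S ω = past S} * ENNReal.ofReal (transER κ n m (past T) B')

/-- Vertex exchangeability of a random adjacency matrix on `n` vertices. -/
def VertexExchangeable {Ω : Type*} [MeasurableSpace Ω] (μ : Measure Ω)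
    (n : ℕ) (X0 : Ω → ℕ → ℕ → ℕ) : Prop :=
  ∀ τ : Equiv.Perm ℕ, (∀ i, n ≤ i → τ i = i) →
    ∀ B : ℕ → ℕ → ℕ, μ {ω | X0 ω = B} = μ {ω | (fun i j => X0 ω (τ i) (τ j)) = B}

/-- Poisson point probability `p(k,λ)`. -/
def poiP (k : ℕ) (l : ℝ) : ℝ := Real.exp (-l) * l ^ k / (Nat.factorial k : ℝ)

/-- Binomial point probability `b(k,n,p)`. -/
def binP (k n : ℕ) (p : ℝ) : ℝ := (n.choose k : ℝ) * p ^ k * (1 - p) ^ (n - k)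

/-- `q(t,h,k,μ)`: time-`t` transition probability from `h` to `k` of the M/M/∞ queue with
arrival rate `μ` and service rate 1. -/
def qMM (t : ℝ) (h k : ℕ) (μ : ℝ) : ℝ :=
  ∑ l ∈ Finset.range (k + 1), binP l h (Real.exp (-t)) * poiP (k - l) ((1 - Real.exp (-t)) * μ)

/-- The multigraphon `W_t` describing the edge reconnecting model on the `n²` time scale. -/
def WtER (W : ℝ → ℝ → ℕ → ℝ) (t : ℝ) : ℝ → ℝ → ℕ → ℝ := fun x y k =>
  if x = y then
    (if 2 ∣ k then
      ∑' h : ℕ, W x x (2 * h) * qMM t h (k / 2) (degW W x ^ 2 / (2 * rhoW W))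
     else 0)
  else ∑' h : ℕ, W x y h * qMM t h k (degW W x * degW W y / rhoW W)

/-- Gamma density `g(x,α,β)`. -/
def gamP (x α β : ℝ) : ℝ :=
  if 0 < x then x ^ (α - 1) * (β ^ α * Real.exp (-(β * x)) / Real.Gamma α) else 0

/-- `τ(α,t) = α/(e^{αt}-1)`. -/
def tauCIR (α t : ℝ) : ℝ := α / (Real.exp (α * t) - 1)

/-- Transition density `f(t,z,y)` of the Cox–Ingersoll–Ross process with parameters `κ, ρ`. -/
def cirDens (κ ρ t z y : ℝ) : ℝ :=
  ∑' i : ℕ, poiP i (z * tauCIR (κ / ρ) t) * gamP y ((κ : ℝ) + i) (tauCIR (κ / ρ) t + κ / ρ)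

/-- The measure `dF₀` where `F₀(x) = Leb{y ∈ [0,1] : D(W,y) ≤ x}`: the push-forward of
Lebesgue measure on `[0,1]` under the average degree function. -/
def F0meas (W : ℝ → ℝ → ℕ → ℝ) : Measure ℝ :=
  Measure.map (degW W) (volume.restrict (Icc (0:ℝ) 1))

/-- The distribution function `F₀(x) = Leb{y ∈ [0,1] : D(W,y) ≤ x}`. -/
def F0fun (W : ℝ → ℝ → ℕ → ℝ) (x : ℝ) : ℝ :=
  (volume {y ∈ Icc (0:ℝ) 1 | degW W y ≤ x}).toReal

/-- Generalized inverse `F₀⁻¹(x) = min{z : F₀(z) ≥ x}`. -/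
def F0inv (W : ℝ → ℝ → ℕ → ℝ) (x : ℝ) : ℝ := sInf {z : ℝ | x ≤ F0fun W z}

/-- The mixed CIR density `f(t,y) = ∫₀^∞ f(t,z,y) dF₀(z)`. -/
def fCIRmix (κ ρ : ℝ) (W : ℝ → ℝ → ℕ → ℝ) (t y : ℝ) : ℝ :=
  ∫ z, cirDens κ ρ t z y ∂(F0meas W)

/-- The distribution function `F_t(x) = ∫₀ˣ f(t,y) dy`. -/
def Fcir (κ ρ : ℝ) (W : ℝ → ℝ → ℕ → ℝ) (t x : ℝ) : ℝ :=
  ∫ y in Ioc (0:ℝ) x, fCIRmix κ ρ W t y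

/-- Generalized inverse `F_t⁻¹(x) = min{z : F_t(z) ≥ x}`. -/
def FcirInv (κ ρ : ℝ) (W : ℝ → ℝ → ℕ → ℝ) (t x : ℝ) : ℝ :=
  sInf {z : ℝ | x ≤ Fcir κ ρ W t z}

/-- The multigraphon `Ŵ_t` describing the edge reconnecting model on the `n³` time scale. -/
def WhatER (κ : ℝ) (W : ℝ → ℝ → ℕ → ℝ) (t : ℝ) : ℝ → ℝ → ℕ → ℝ := fun x y k =>
  if x = y then
    (if 2 ∣ k then poiP (k / 2) (FcirInv κ (rhoW W) W t x ^ 2 / (2 * rhoW W)) else 0)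
  else poiP k (FcirInv κ (rhoW W) W t x * FcirInv κ (rhoW W) W t y / rhoW W)

/-- The product measure on `ℝ^k` of `k` i.i.d. coordinates with density `f(t,·)`. -/
def cirPi (κ ρ : ℝ) (W : ℝ → ℝ → ℕ → ℝ) (t : ℝ) (k : ℕ) : Measure (Fin k → ℝ) :=
  volume.withDensity fun z => ∏ i : Fin k, ENNReal.ofReal (fCIRmix κ ρ W t (z i))

/-- Condition (E): uniform exponential moment bound for the initial multigraphs. -/
def CondE (B : (n : ℕ) → ℕ → ℕ → ℕ) : Prop :=
  ∃ lam : ℝ, 0 < lam ∧ ∃ C : ℝ, ∀ n : ℕ,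
    (∑ i ∈ Finset.range n, ∑ j ∈ (Finset.range n).filter (fun j => i < j),
        Real.exp (lam * (B n i j : ℝ))) ≤ C * (n.choose 2 : ℝ) ∧
    (∑ i ∈ Finset.range n, Real.exp (lam * (B n i i : ℝ))) ≤ C * (n : ℝ)

/-- Convergence `B_n → W` of a sequence of multigraphs to a multigraphon. -/
def GraphSeqConvTo (B : (n : ℕ) → ℕ → ℕ → ℕ) (W : ℝ → ℝ → ℕ → ℝ) : Prop :=
  ∀ (k : ℕ) (A : ℕ → ℕ → ℕ), IsAdjOn k A →
    Tendsto (fun n => tEqB k n A (B n)) atTop (𝓝 (tEqW k A W))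


/-!
For fixed `x, y` the entry `W_t(x,y,k)` is a mixture `∑ₕ W(x,y,h) q(t,h,k,μ)` of M/M/∞
transition probabilities, which lie in `[0,1]` and are continuous in `t`. As the weights
`W(x,y,·)` sum to `1`, the Weierstrass M-test makes `t ↦ W_t(x,y,k)` continuous with values in
`[0,1]`, and dominated convergence on the unit cube (with bound `1`) transfers this to
`t ↦ t_=(A,W_t)`. Finally `q(0,h,k,μ) = 1[h = k]`, so `W_0 = W`.
-/

lemma poiP_nonneg {l : ℝ} (hl : 0 ≤ l) (k : ℕ) : 0 ≤ poiP k l := by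
  unfold poiP; positivity

lemma poiP_le_one {l : ℝ} (hl : 0 ≤ l) (k : ℕ) : poiP k l ≤ 1 := by
  calc poiP k l = Real.exp (-l) * (l ^ k / k.factorial) := mul_div_assoc _ _ _
    _ ≤ Real.exp (-l) * Real.exp l := by gcongr; exact Real.pow_div_factorial_le_exp l hl k
    _ = 1 := by rw [← Real.exp_add, neg_add_cancel, Real.exp_zero]

lemma poiP_zero_right (k : ℕ) : poiP k 0 = if k = 0 then 1 else 0 := by
  rcases Nat.eq_zero_or_pos k with rfl | hk
  · simp [poiP]
  · simp [poiP, hk.ne']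

lemma binP_nonneg {p : ℝ} (h0 : 0 ≤ p) (h1 : p ≤ 1) (k n : ℕ) : 0 ≤ binP k n p := by
  have : 0 ≤ 1 - p := sub_nonneg.2 h1
  unfold binP; positivity

lemma binP_eq_zero_of_lt {k n : ℕ} (h : n < k) (p : ℝ) : binP k n p = 0 := by
  simp [binP, Nat.choose_eq_zero_of_lt h]

lemma binP_one_right (k n : ℕ) : binP k n 1 = if k = n then 1 else 0 := by
  rcases lt_trichotomy k n with h | rfl | h
  · simp [binP, h.ne, Nat.sub_ne_zero_of_lt h]
  · simp [binP]
  · simp [binP_eq_zero_of_lt h, h.ne']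

lemma sum_range_binP_le_one {p : ℝ} (h0 : 0 ≤ p) (h1 : p ≤ 1) (n m : ℕ) :
    ∑ l ∈ Finset.range m, binP l n p ≤ 1 := by
  have htotal : ∑ l ∈ Finset.range (n + 1), binP l n p = 1 := by
    calc ∑ l ∈ Finset.range (n + 1), binP l n p = (p + (1 - p)) ^ n := by
          rw [add_pow]; exact Finset.sum_congr rfl fun l _ => by unfold binP; ring
      _ = 1 := by rw [add_sub_cancel, one_pow]
  calc ∑ l ∈ Finset.range m, binP l n p
      ≤ ∑ l ∈ Finset.range (max m (n + 1)), binP l n p :=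
        Finset.sum_le_sum_of_subset_of_nonneg (Finset.range_subset_range.2 (le_max_left _ _))
          fun l _ _ => binP_nonneg h0 h1 l n
    _ = 1 := by
        rw [← htotal]
        refine (Finset.sum_subset (Finset.range_subset_range.2 (le_max_right _ _)) ?_).symm
        intro l _ hl
        exact binP_eq_zero_of_lt (by simpa using hl) p

section qMM

variable {t μ : ℝ}

lemma qMM_nonneg (ht : 0 ≤ t) (hμ : 0 ≤ μ) (h k : ℕ) : 0 ≤ qMM t h k μ := by
  have hp : Real.exp (-t) ≤ 1 := Real.exp_le_one_iff.2 (neg_nonpos.2 ht)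
  exact Finset.sum_nonneg fun l _ => mul_nonneg (binP_nonneg (Real.exp_pos _).le hp l h)
    (poiP_nonneg (mul_nonneg (sub_nonneg.2 hp) hμ) _)

lemma qMM_le_one (ht : 0 ≤ t) (hμ : 0 ≤ μ) (h k : ℕ) : qMM t h k μ ≤ 1 := by
  have hp : Real.exp (-t) ≤ 1 := Real.exp_le_one_iff.2 (neg_nonpos.2 ht)
  calc qMM t h k μ ≤ ∑ l ∈ Finset.range (k + 1), binP l h (Real.exp (-t)) := by
        refine Finset.sum_le_sum fun l _ => mul_le_of_le_one_right ?_ ?_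
        · exact binP_nonneg (Real.exp_pos _).le hp l h
        · exact poiP_le_one (mul_nonneg (sub_nonneg.2 hp) hμ) _
    _ ≤ 1 := sum_range_binP_le_one (Real.exp_pos _).le hp h (k + 1)

lemma qMM_mem_Icc (ht : 0 ≤ t) (hμ : 0 ≤ μ) (h k : ℕ) : qMM t h k μ ∈ Icc (0 : ℝ) 1 :=
  ⟨qMM_nonneg ht hμ h k, qMM_le_one ht hμ h k⟩

lemma qMM_zero_left (h k : ℕ) (μ : ℝ) : qMM 0 h k μ = if h = k then 1 else 0 := by
  simp only [qMM, neg_zero, Real.exp_zero, sub_self, zero_mul, binP_one_right, poiP_zero_right]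
  rw [Finset.sum_eq_single k]
  · simp [eq_comm]
  · intro l hl hlk
    simp [Nat.sub_ne_zero_of_lt (lt_of_le_of_ne (Finset.mem_range_succ_iff.1 hl) hlk)]
  · simp

@[fun_prop]
lemma Continuous.qMM {α : Type*} [TopologicalSpace α] {t μ : α → ℝ} (ht : Continuous t)
    (hμ : Continuous μ) (h k : ℕ) : Continuous fun a => qMM (t a) h k (μ a) := by
  unfold _root_.qMM binP poiP; fun_prop

end qMM

lemma tsum_mul_mem_Icc {w g : ℕ → ℝ} (hw0 : ∀ h, 0 ≤ w h) (hw : Summable w)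
    (hw1 : ∑' h, w h ≤ 1) (hg : ∀ h, g h ∈ Icc (0 : ℝ) 1) : ∑' h, w h * g h ∈ Icc (0 : ℝ) 1 := by
  have hle : ∀ h, w h * g h ≤ w h := fun h => mul_le_of_le_one_right (hw0 h) (hg h).2
  have hnonneg : ∀ h, 0 ≤ w h * g h := fun h => mul_nonneg (hw0 h) (hg h).1
  exact ⟨tsum_nonneg hnonneg,
    (Summable.tsum_le_tsum hle (hw.of_nonneg_of_le hnonneg hle) hw).trans hw1⟩

lemma continuousOn_tsum_mul {α : Type*} [TopologicalSpace α] {w : ℕ → ℝ} {g : ℕ → α → ℝ}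
    {s : Set α} (hw : Summable w) (hg : ∀ h, ContinuousOn (g h) s)
    (hg1 : ∀ h, ∀ a ∈ s, ‖g h a‖ ≤ 1) : ContinuousOn (fun a => ∑' h, w h * g h a) s := by
  refine continuousOn_tsum (fun h => continuousOn_const.mul (hg h)) hw.abs fun h a ha => ?_
  rw [norm_mul, Real.norm_eq_abs]
  exact mul_le_of_le_one_right (abs_nonneg _) (hg1 h a ha)

namespace IsMultigraphon

variable {W : ℝ → ℝ → ℕ → ℝ} (hW : IsMultigraphon W)
include hW

lemma nonneg (x y : ℝ) (k : ℕ) : 0 ≤ W x y k := (hW.2.1 x y k).1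

lemma summable {x y : ℝ} (hx : x ∈ Icc (0 : ℝ) 1) (hy : y ∈ Icc (0 : ℝ) 1) :
    Summable (W x y) := by
  by_contra hs
  have h := hW.2.2.2.1 x hx y hy
  rw [tsum_eq_zero_of_not_summable hs] at h
  exact zero_ne_one h

lemma tsum_le_one {x y : ℝ} (hx : x ∈ Icc (0 : ℝ) 1) (hy : y ∈ Icc (0 : ℝ) 1) :
    ∑' h, W x y h ≤ 1 :=
  (hW.2.2.2.1 x hx y hy).le

lemma summable_two_mul {x : ℝ} (hx : x ∈ Icc (0 : ℝ) 1) : Summable fun h => W x x (2 * h) :=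
  (hW.summable hx hx).comp_injective (mul_right_injective₀ two_ne_zero)

lemma tsum_two_mul_le_one {x : ℝ} (hx : x ∈ Icc (0 : ℝ) 1) : ∑' h, W x x (2 * h) ≤ 1 :=
  (tsum_comp_le_tsum_of_inj (hW.summable hx hx) (hW.nonneg x x)
    (mul_right_injective₀ two_ne_zero)).trans (hW.tsum_le_one hx hx)

lemma measurable_uncurry (k : ℕ) : Measurable fun p : ℝ × ℝ => W p.1 p.2 k :=
  hW.1.comp (measurable_fst.prodMk (measurable_snd.prodMk measurable_const))

lemma degW_nonneg (x : ℝ) : 0 ≤ degW W x :=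
  setIntegral_nonneg measurableSet_Icc fun y _ =>
    tsum_nonneg fun k => mul_nonneg k.cast_nonneg (hW.nonneg x y k)

lemma rhoW_nonneg : 0 ≤ rhoW W :=
  setIntegral_nonneg measurableSet_Icc fun x _ => hW.degW_nonneg x

lemma measurable_degW : Measurable (degW W) := by
  have hsum : Measurable fun p : ℝ × ℝ => ∑' k : ℕ, (k : ℝ) * W p.1 p.2 k :=
    Measurable.tsum fun k => measurable_const.mul (hW.measurable_uncurry k)
  exact (hsum.stronglyMeasurable.integral_prod_right' (ν := volume.restrict (Icc 0 1))).measurable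

end IsMultigraphon

section WtER

variable {W : ℝ → ℝ → ℕ → ℝ} (hW : IsMultigraphon W)
include hW

lemma WtER_mem_Icc {t x y : ℝ} (ht : 0 ≤ t) (hx : x ∈ Icc (0 : ℝ) 1) (hy : y ∈ Icc (0 : ℝ) 1)
    (k : ℕ) : WtER W t x y k ∈ Icc (0 : ℝ) 1 := by
  have hD := hW.degW_nonneg
  have hρ := hW.rhoW_nonneg
  unfold WtER
  split_ifs with hxy hk
  · subst hxy
    exact tsum_mul_mem_Icc (fun h => hW.nonneg x x _) (hW.summable_two_mul hx)
      (hW.tsum_two_mul_le_one hx) fun h => qMM_mem_Icc ht (by positivity) h _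
  · exact ⟨le_rfl, zero_le_one⟩
  · exact tsum_mul_mem_Icc (hW.nonneg x y) (hW.summable hx hy) (hW.tsum_le_one hx hy)
      fun h => qMM_mem_Icc ht (div_nonneg (mul_nonneg (hD x) (hD y)) hρ) h _

lemma measurable_WtER (t : ℝ) (k : ℕ) : Measurable fun p : ℝ × ℝ => WtER W t p.1 p.2 k := by
  have hD := hW.measurable_degW
  unfold WtER
  refine Measurable.ite (measurableSet_eq_fun measurable_fst measurable_snd) ?_ ?_
  · refine Measurable.ite (MeasurableSet.const _) (Measurable.tsum fun h => ?_) measurable_const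
    exact (hW.1.comp (measurable_fst.prodMk (measurable_fst.prodMk measurable_const))).mul
      ((continuous_const.qMM continuous_id h _).measurable.comp
        (((hD.comp measurable_fst).pow_const 2).div_const _))
  · refine Measurable.tsum fun h => (hW.measurable_uncurry h).mul ?_
    exact (continuous_const.qMM continuous_id h k).measurable.comp
      (((hD.comp measurable_fst).mul (hD.comp measurable_snd)).div_const _)

lemma continuousOn_WtER {x y : ℝ} (hx : x ∈ Icc (0 : ℝ) 1) (hy : y ∈ Icc (0 : ℝ) 1) (k : ℕ) :
    ContinuousOn (fun t => WtER W t x y k) (Ici 0) := by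
  have hD := hW.degW_nonneg
  have hρ := hW.rhoW_nonneg
  have hq : ∀ {μ : ℝ}, 0 ≤ μ → ∀ h j, ∀ t ∈ Ici (0 : ℝ), ‖qMM t h j μ‖ ≤ 1 := fun hμ h j t ht =>
    by rw [Real.norm_of_nonneg (qMM_nonneg ht hμ h j)]; exact qMM_le_one ht hμ h j
  unfold WtER
  split_ifs with hxy hk
  · subst hxy
    exact continuousOn_tsum_mul (hW.summable_two_mul hx)
      (fun h => (continuous_id.qMM continuous_const h _).continuousOn) (hq (by positivity) · _)
  · exact continuousOn_const
  · exact continuousOn_tsum_mul (hW.summable hx hy)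
      (fun h => (continuous_id.qMM continuous_const h _).continuousOn)
      (hq (div_nonneg (mul_nonneg (hD x) (hD y)) hρ) · _)

lemma WtER_zero : WtER W 0 = W := by
  funext x y k
  simp only [WtER, qMM_zero_left, mul_ite, mul_one, mul_zero, tsum_ite_eq]
  split_ifs with hxy hk
  · rw [hxy, Nat.mul_div_cancel' hk]
  · obtain ⟨j, rfl⟩ := Nat.odd_iff.2 (Nat.two_dvd_ne_zero.1 hk)
    rw [hxy, hW.2.2.2.2]
  · rfl

end WtER

theorem continuousOn_tEqW {X : Type*} [TopologicalSpace X] [FirstCountableTopology X]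
    {F : X → ℝ → ℝ → ℕ → ℝ} {s : Set X} (k : ℕ) (A : ℕ → ℕ → ℕ)
    (hmeas : ∀ a ∈ s, ∀ m, Measurable fun p : ℝ × ℝ => F a p.1 p.2 m)
    (hbound : ∀ a ∈ s, ∀ x ∈ Icc (0 : ℝ) 1, ∀ y ∈ Icc (0 : ℝ) 1, ∀ m, F a x y m ∈ Icc (0 : ℝ) 1)
    (hcont : ∀ x ∈ Icc (0 : ℝ) 1, ∀ y ∈ Icc (0 : ℝ) 1, ∀ m, ContinuousOn (fun a => F a x y m) s) :
    ContinuousOn (fun a => tEqW k A (F a)) s := by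
  set cube := Set.univ.pi fun _ : Fin k => Icc (0 : ℝ) 1
  have hcube : MeasurableSet cube := MeasurableSet.univ_pi fun _ => measurableSet_Icc
  have hcube_fin : volume cube ≠ ∞ := by simp only [cube, volume_pi_pi]; simp [Real.volume_Icc]
  have hmem : ∀ᵐ x ∂volume.restrict cube, ∀ i, x i ∈ Icc (0 : ℝ) 1 := by
    filter_upwards [ae_restrict_mem hcube] with x hx using fun i => hx i (mem_univ i)
  refine continuousOn_of_dominated (bound := fun _ => 1) (fun a ha => ?_) (fun a ha => ?_)
    (integrableOn_const hcube_fin) ?_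
  · refine (Finset.measurable_prod _ fun i _ => Finset.measurable_prod _ fun j _ => ?_)
      |>.aestronglyMeasurable
    exact (hmeas a ha _).comp (f := fun x : Fin k → ℝ => (x i, x j)) ((measurable_pi_apply i).prodMk (measurable_pi_apply j))
  · filter_upwards [hmem] with x hx
    have hF := fun i j => hbound a ha _ (hx i) _ (hx j) (A i j)
    rw [Real.norm_of_nonneg (Finset.prod_nonneg fun i _ => Finset.prod_nonneg fun j _ => (hF i j).1)]
    exact Finset.prod_le_one (fun i _ => Finset.prod_nonneg fun j _ => (hF i j).1)
      fun i _ => Finset.prod_le_one (fun j _ => (hF i j).1) fun j _ => (hF i j).2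
  · filter_upwards [hmem] with x hx
    exact continuousOn_finsetProd _ fun i _ => continuousOn_finsetProd _ fun j _ =>
      hcont _ (hx i) _ (hx j) _

theorem Wt_continuous_and_initial_general
    (W : ℝ → ℝ → ℕ → ℝ) (hW : IsMultigraphon W)
    (k : ℕ) (A : ℕ → ℕ → ℕ) :
    ContinuousOn (fun t : ℝ => tEqW k A (WtER W t)) (Ici (0:ℝ)) ∧
    Tendsto (fun t : ℝ => tEqW k A (WtER W t)) (𝓝[>] (0:ℝ)) (𝓝 (tEqW k A W)) := by
  have hcont : ContinuousOn (fun t : ℝ => tEqW k A (WtER W t)) (Ici 0) :=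
    continuousOn_tEqW k A (fun t _ => measurable_WtER hW t)
      (fun _ ht _ hx _ hy => WtER_mem_Icc hW ht hx hy) fun _ hx _ hy => continuousOn_WtER hW hx hy
  refine ⟨hcont, ?_⟩
  have h0 : ContinuousWithinAt (fun t : ℝ => tEqW k A (WtER W t)) (Ici 0) 0 := hcont 0 self_mem_Ici
  rw [ContinuousWithinAt, WtER_zero hW] at h0
  exact h0.mono_left (nhdsWithin_mono 0 Ioi_subset_Ici_self)

/-- `t ↦ t_=(A, W_t)` is continuous on `[0,∞)` and `W_t → W` as `t → 0+`. -/
theorem Wt_continuous_and_initial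
    (W : ℝ → ℝ → ℕ → ℝ) (hW : IsMultigraphon W) (κ : ℝ) (hκ : 0 < κ)
    (hρpos : 0 < rhoW W) (hρfin : IntegrableOn (degW W) (Icc (0:ℝ) 1))
    (k : ℕ) (A : ℕ → ℕ → ℕ) (hA : IsAdjOn k A) :
    ContinuousOn (fun t : ℝ => tEqW k A (WtER W t)) (Ici (0:ℝ)) ∧
    Tendsto (fun t : ℝ => tEqW k A (WtER W t)) (𝓝[>] (0:ℝ)) (𝓝 (tEqW k A W)) :=
  Wt_continuous_and_initial_general W hW k A

end
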